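/- Let μ be a compactly supported positive measure on ℝⁿ, n ≥ 2, satisfying μ(B(x,r)) ≤ C_μ r^α, and suppose the restriction estimate ‖ĝ‖_{L²(μ_R)} ≤ A R^{α/(2n)} ‖g‖_{L²(S^{n-1})} holds for all g ∈ L²(S^{n-1}) and R large, where μ_R = R^α μ(·/R). Then for f ∈ L²(μ) and R large, the restriction of the Fourier transform of fμ to the sphere of radius R satisfies ‖ (fμ)^∧ |_{|ξ|=R} ‖_{L²(R S^{n-1})} ≲ A R^{(n-1)/2 − (α/2)(1 − 1/n)} ‖f‖_{L²(μ)}. -/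

import Mathlib

open MeasureTheory Metric ENNReal

/-- Fourier transform of the complex measure `f dν`. -/
noncomputable def fourierMu (n : ℕ) (ν : Measure (EuclideanSpace ℝ (Fin n)))
    (f : EuclideanSpace ℝ (Fin n) → ℂ) (ξ : EuclideanSpace ℝ (Fin n)) : ℂ :=
  ∫ x, Complex.exp (-Complex.I * ((@inner ℝ _ _ x ξ : ℝ) : ℂ)) * f x ∂ν

/-- Fourier extension of a function `g` on the unit sphere, `ĝ(x) = ∫_{S^{n-1}} e^{-i x·ω} g(ω) dσ(ω)`. -/
noncomputable def fourierSphere (n : ℕ)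
    (σ : Measure (sphere (0 : EuclideanSpace ℝ (Fin n)) 1))
    (g : sphere (0 : EuclideanSpace ℝ (Fin n)) 1 → ℂ) (x : EuclideanSpace ℝ (Fin n)) : ℂ :=
  ∫ ω, Complex.exp (-Complex.I *
    ((@inner ℝ _ _ x (ω : EuclideanSpace ℝ (Fin n)) : ℝ) : ℂ)) * g ω ∂σ

/-! With `F(ω) = (fμ)^(Rω)` and `g = F̄`, Fubini turns `∫ |F|² dσ = ∫ F g dσ` into
`∫ f(x) ĝ(Rx) dμ(x)`, which Cauchy–Schwarz bounds by `‖f‖_{L²(μ)} ‖ĝ(R·)‖_{L²(μ)}`.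
Since `μ_R = R^α (R·)_* μ`, the last factor is
`R^{-α/2} ‖ĝ‖_{L²(μ_R)} ≤ A R^{α/(2n) - α/2} ‖F‖_{L²(σ)}`.
Dividing by `‖F‖_{L²(σ)}` and multiplying by the Jacobian `R^{n-1}` of `ω ↦ Rω` gives the
estimate with `C = 1`. -/

open scoped ComplexConjugate

lemma norm_exp_neg_I_mul_ofReal (r : ℝ) : ‖Complex.exp (-Complex.I * r)‖ = 1 := by
  rw [Complex.norm_exp]; simp

section Fourier

variable {n : ℕ}

lemma continuous_fourierMu {ν : Measure (EuclideanSpace ℝ (Fin n))}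
    {f : EuclideanSpace ℝ (Fin n) → ℂ} (hf : Integrable f ν) :
    Continuous (fourierMu n ν f) := by
  refine continuous_of_dominated (bound := fun x => ‖f x‖) (fun ξ => ?_) (fun ξ => ?_)
    hf.norm ?_
  · exact (by fun_prop : Continuous fun x : EuclideanSpace ℝ (Fin n) =>
      Complex.exp (-Complex.I * ((@inner ℝ _ _ x ξ : ℝ) : ℂ))).aestronglyMeasurable.mul
        hf.aestronglyMeasurable
  · exact .of_forall fun x => by rw [norm_mul, norm_exp_neg_I_mul_ofReal, one_mul]
  · exact .of_forall fun x => by fun_prop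

lemma continuous_fourierSphere {σ : Measure (sphere (0 : EuclideanSpace ℝ (Fin n)) 1)}
    {g : sphere (0 : EuclideanSpace ℝ (Fin n)) 1 → ℂ} (hg : Integrable g σ) :
    Continuous (fourierSphere n σ g) := by
  refine continuous_of_dominated (bound := fun ω => ‖g ω‖) (fun x => ?_) (fun x => ?_)
    hg.norm ?_
  · exact (by fun_prop : Continuous fun ω : sphere (0 : EuclideanSpace ℝ (Fin n)) 1 =>
      Complex.exp (-Complex.I * ((@inner ℝ _ _ x (ω : EuclideanSpace ℝ (Fin n)) : ℝ) : ℂ)))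
        |>.aestronglyMeasurable.mul hg.aestronglyMeasurable
  · exact .of_forall fun ω => by rw [norm_mul, norm_exp_neg_I_mul_ofReal, one_mul]
  · exact .of_forall fun ω => by fun_prop

theorem integral_fourierMu_smul_mul_eq_integral_mul_fourierSphere
    {ν : Measure (EuclideanSpace ℝ (Fin n))} [SFinite ν]
    {σ : Measure (sphere (0 : EuclideanSpace ℝ (Fin n)) 1)} [SFinite σ]
    {f : EuclideanSpace ℝ (Fin n) → ℂ} {g : sphere (0 : EuclideanSpace ℝ (Fin n)) 1 → ℂ}
    (hf : Integrable f ν) (hg : Integrable g σ) (R : ℝ) :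
    ∫ ω, fourierMu n ν f (R • (ω : EuclideanSpace ℝ (Fin n))) * g ω ∂σ
      = ∫ x, f x * fourierSphere n σ g (R • x) ∂ν := by
  set k : sphere (0 : EuclideanSpace ℝ (Fin n)) 1 × EuclideanSpace ℝ (Fin n) → ℂ :=
    fun z => Complex.exp
      (-Complex.I * ((@inner ℝ _ _ z.2 (R • (z.1 : EuclideanSpace ℝ (Fin n))) : ℝ) : ℂ))
  have hk : Continuous k := by fun_prop
  have hint : Integrable (fun z => k z * (g z.1 * f z.2)) (σ.prod ν) :=
    (hg.mul_prod hf).bdd_mul hk.aestronglyMeasurable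
      (.of_forall fun z => (norm_exp_neg_I_mul_ofReal _).le)
  calc ∫ ω, fourierMu n ν f (R • (ω : EuclideanSpace ℝ (Fin n))) * g ω ∂σ
      = ∫ ω, ∫ x, k (ω, x) * (g ω * f x) ∂ν ∂σ := by
        refine integral_congr_ae (.of_forall fun ω => ?_)
        simp only [fourierMu, ← integral_mul_const, k]
        congr 1; ext x; ring
    _ = ∫ x, ∫ ω, k (ω, x) * (g ω * f x) ∂σ ∂ν := integral_integral_swap hint
    _ = ∫ x, f x * fourierSphere n σ g (R • x) ∂ν := by
        refine integral_congr_ae (.of_forall fun x => ?_)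
        simp only [fourierSphere, ← integral_const_mul, k, real_inner_smul_left,
          real_inner_smul_right]
        congr 1; ext ω; ring

end Fourier

section L2

variable {α : Type*} [MeasurableSpace α] {μ : Measure α}

theorem sq_eLpNorm_two_eq_lintegral {E : Type*} [NormedAddCommGroup E] (f : α → E) :
    eLpNorm f 2 μ ^ 2 = ∫⁻ x, ‖f x‖ₑ ^ 2 ∂μ := by
  simpa using eLpNorm_nnreal_pow_eq_lintegral (f := f) (μ := μ) (p := 2) two_ne_zero

theorem MeasureTheory.MemLp.sq_eLpNorm_two_eq_enorm_integral_mul_conj {f : α → ℂ}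
    (hf : MemLp f 2 μ) :
    eLpNorm f 2 μ ^ 2 = ‖∫ x, f x * conj (f x) ∂μ‖ₑ := by
  have hreal : ∫ x, f x * conj (f x) ∂μ = ((∫ x, ‖f x‖ ^ 2 ∂μ : ℝ) : ℂ) := by
    rw [← integral_complex_ofReal]
    congr 1; ext x
    rw [Complex.mul_conj, Complex.normSq_eq_norm_sq, Complex.ofReal_pow]
  rw [hreal, ← ofReal_norm, Complex.norm_real,
    Real.norm_of_nonneg (integral_nonneg fun _ => by positivity),
    ofReal_integral_eq_lintegral_ofReal (hf.integrable_norm_pow two_ne_zero)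
      (.of_forall fun _ => by positivity), sq_eLpNorm_two_eq_lintegral]
  simp_rw [ENNReal.ofReal_pow (norm_nonneg _), ofReal_norm]

theorem enorm_integral_mul_le_eLpNorm_mul_eLpNorm {𝕜 : Type*} [RCLike 𝕜] {f g : α → 𝕜}
    (hf : AEStronglyMeasurable f μ) (hg : AEStronglyMeasurable g μ) :
    ‖∫ x, f x * g x ∂μ‖ₑ ≤ eLpNorm f 2 μ * eLpNorm g 2 μ :=
  calc ‖∫ x, f x * g x ∂μ‖ₑ ≤ eLpNorm (f • g) 1 μ := by
        rw [eLpNorm_one_eq_lintegral_enorm]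
        exact enorm_integral_le_lintegral_enorm _
    _ ≤ eLpNorm f 2 μ * eLpNorm g 2 μ := eLpNorm_smul_le_mul_eLpNorm hg hf

theorem eLpNorm_comp_eq_rpow_mul_eLpNorm_smul_map {β E : Type*} [MeasurableSpace β]
    [NormedAddCommGroup E] {φ : α → β} (hφ : AEMeasurable φ μ) {G : β → E}
    (hG : AEStronglyMeasurable G (μ.map φ)) {c : ℝ≥0∞} (hc0 : c ≠ 0) (hc : c ≠ ∞) (p : ℝ≥0∞) :
    eLpNorm (G ∘ φ) p μ = c ^ (-(1 / p).toReal) * eLpNorm G p (c • μ.map φ) := by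
  rw [eLpNorm_smul_measure_of_ne_zero hc0, smul_eq_mul, ← mul_assoc,
    ← ENNReal.rpow_add _ _ hc0 hc, neg_add_cancel, ENNReal.rpow_zero, one_mul,
    eLpNorm_map_measure hG hφ]

end L2

theorem ENNReal.le_of_sq_le_mul {a b : ℝ≥0∞} (ha : a ≠ ∞) (h : a ^ 2 ≤ b * a) : a ≤ b := by
  rcases eq_or_ne a 0 with rfl | ha0
  · exact bot_le
  · rw [sq] at h
    exact (ENNReal.mul_le_mul_iff_left ha0 ha).mp h

theorem ofReal_rpow_mul_sq_eq_ofReal_mul_rpow_sq {R : ℝ} (hR : 0 < R) (A α : ℝ) (n : ℕ) :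
    ENNReal.ofReal (R ^ ((n : ℝ) - 1)) *
        (ENNReal.ofReal (R ^ α) ^ (-(1 / 2 : ℝ)) * ENNReal.ofReal (A * R ^ (α / (2 * n)))) ^ 2
      = ENNReal.ofReal (A * R ^ (((n : ℝ) - 1) / 2 - (α / 2) * (1 - 1 / n))) ^ 2 := by
  have hc : ENNReal.ofReal (R ^ α) ^ (-(1 / 2 : ℝ)) = ENNReal.ofReal (R ^ (-(α / 2))) := by
    rw [ENNReal.ofReal_rpow_of_pos (Real.rpow_pos_of_pos hR _), ← Real.rpow_mul hR.le]
    ring_nf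
  have hexp : R ^ ((n : ℝ) - 1) * (R ^ (-(α / 2)) * R ^ (α / (2 * n))) ^ 2
      = (R ^ (((n : ℝ) - 1) / 2 - (α / 2) * (1 - 1 / n))) ^ 2 := by
    simp only [← Real.rpow_mul_natCast hR.le, ← Real.rpow_add hR]
    ring_nf
  rw [hc, ENNReal.ofReal_mul' (by positivity), ENNReal.ofReal_mul' (by positivity)]
  calc _ = ENNReal.ofReal A ^ 2 *
        ENNReal.ofReal (R ^ ((n : ℝ) - 1) * (R ^ (-(α / 2)) * R ^ (α / (2 * n))) ^ 2) := by
        rw [ENNReal.ofReal_mul (by positivity), ENNReal.ofReal_pow (by positivity),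
          ENNReal.ofReal_mul (by positivity)]
        ring
    _ = _ := by rw [hexp, ENNReal.ofReal_pow (by positivity)]; ring

theorem eLpNorm_fourierMu_smul_le_of_extension_estimate {n : ℕ}
    {μ : Measure (EuclideanSpace ℝ (Fin n))} [IsFiniteMeasure μ]
    {σ : Measure (sphere (0 : EuclideanSpace ℝ (Fin n)) 1)} [IsFiniteMeasure σ]
    {f : EuclideanSpace ℝ (Fin n) → ℂ} (hf : MemLp f 2 μ) {R : ℝ} {c K : ℝ≥0∞} (hc0 : c ≠ 0)
    (hc : c ≠ ∞) (hext : ∀ g : sphere (0 : EuclideanSpace ℝ (Fin n)) 1 → ℂ,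
      eLpNorm (fourierSphere n σ g) 2 (c • μ.map (R • ·)) ≤ K * eLpNorm g 2 σ) :
    eLpNorm (fun ω : sphere (0 : EuclideanSpace ℝ (Fin n)) 1 =>
        fourierMu n μ f (R • (ω : EuclideanSpace ℝ (Fin n)))) 2 σ
      ≤ eLpNorm f 2 μ * (c ^ (-(1 / 2 : ℝ)) * K) := by
  set F : sphere (0 : EuclideanSpace ℝ (Fin n)) 1 → ℂ :=
    fun ω => fourierMu n μ f (R • (ω : EuclideanSpace ℝ (Fin n)))
  have hF : MemLp F 2 σ := ContinuousMap.memLp σ ℂ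
    ⟨F, (continuous_fourierMu (hf.integrable one_le_two)).comp (by fun_prop)⟩
  set G := fourierSphere n σ (star F)
  have hG : Continuous G := continuous_fourierSphere (hF.star.integrable one_le_two)
  refine ENNReal.le_of_sq_le_mul hF.eLpNorm_ne_top ?_
  calc eLpNorm F 2 σ ^ 2 = ‖∫ ω, F ω * star F ω ∂σ‖ₑ :=
        hF.sq_eLpNorm_two_eq_enorm_integral_mul_conj
    _ = ‖∫ x, f x * G (R • x) ∂μ‖ₑ := by
        rw [integral_fourierMu_smul_mul_eq_integral_mul_fourierSphere
          (hf.integrable one_le_two) (hF.star.integrable one_le_two)]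
    _ ≤ eLpNorm f 2 μ * eLpNorm (G ∘ (R • ·)) 2 μ :=
        enorm_integral_mul_le_eLpNorm_mul_eLpNorm hf.1
          (hG.comp (by fun_prop)).aestronglyMeasurable
    _ = eLpNorm f 2 μ * (c ^ (-(1 / 2 : ℝ)) * eLpNorm G 2 (c • μ.map (R • ·))) := by
        rw [eLpNorm_comp_eq_rpow_mul_eLpNorm_smul_map (by fun_prop) hG.aestronglyMeasurable
          hc0 hc]
        norm_num
    _ ≤ eLpNorm f 2 μ * (c ^ (-(1 / 2 : ℝ)) * (K * eLpNorm (star F) 2 σ)) := by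
        gcongr
        exact hext _
    _ = eLpNorm f 2 μ * (c ^ (-(1 / 2 : ℝ)) * K) * eLpNorm F 2 σ := by
        rw [eLpNorm_star]; ring

theorem stmt13_general (n : ℕ)
    (μ : Measure (EuclideanSpace ℝ (Fin n))) [IsFiniteMeasure μ]
    (α : ℝ)
    (σ : Measure (sphere (0 : EuclideanSpace ℝ (Fin n)) 1))
    (hσ : σ = (volume : Measure (EuclideanSpace ℝ (Fin n))).toSphere)
    (A R₀ : ℝ)
    (hrestrict : ∀ R : ℝ, R₀ ≤ R →
      ∀ g : sphere (0 : EuclideanSpace ℝ (Fin n)) 1 → ℂ,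
        eLpNorm (fourierSphere n σ g) 2
            (ENNReal.ofReal (R ^ α) • Measure.map (fun x => R • x) μ)
          ≤ ENNReal.ofReal (A * R ^ (α / (2 * n))) * eLpNorm g 2 σ) :
    ∃ C R₁ : ℝ, 0 < C ∧ R₀ ≤ R₁ ∧
      ∀ (f : EuclideanSpace ℝ (Fin n) → ℂ), MemLp f 2 μ →
        ∀ R : ℝ, R₁ ≤ R →
          ENNReal.ofReal (R ^ ((n : ℝ) - 1)) *
              ∫⁻ ω, (‖fourierMu n μ f (R • (ω : EuclideanSpace ℝ (Fin n)))‖₊ : ℝ≥0∞) ^ 2 ∂σ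
            ≤ (ENNReal.ofReal
                (C * A * R ^ (((n : ℝ) - 1) / 2 - (α / 2) * (1 - 1 / n)))) ^ 2 *
              (eLpNorm f 2 μ) ^ 2 := by
  have : IsFiniteMeasure σ := hσ ▸ inferInstance
  refine ⟨1, max R₀ 1, one_pos, le_max_left _ _, fun f hf R hR => ?_⟩
  have hRpos : 0 < R := one_pos.trans_le ((le_max_right _ _).trans hR)
  have hc0 : ENNReal.ofReal (R ^ α) ≠ 0 := by simpa using Real.rpow_pos_of_pos hRpos α
  have hF := eLpNorm_fourierMu_smul_le_of_extension_estimate hf hc0 ofReal_ne_top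
    (hrestrict R (le_of_max_le_left hR))
  calc _ ≤ ENNReal.ofReal (R ^ ((n : ℝ) - 1)) * (eLpNorm f 2 μ *
          (ENNReal.ofReal (R ^ α) ^ (-(1 / 2 : ℝ)) *
            ENNReal.ofReal (A * R ^ (α / (2 * n))))) ^ 2 := by
        simp_rw [← enorm_eq_nnnorm, ← sq_eLpNorm_two_eq_lintegral]
        gcongr
    _ = _ := by rw [one_mul, ← ofReal_rpow_mul_sq_eq_ofReal_mul_rpow_sq hRpos]; ring

/-- Suppose `μ` is a compactly supported `α`-dimensional measure on `ℝⁿ`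
and the Du–Zhang-type restriction estimate
`‖ĝ‖_{L²(μ_R)} ≤ A R^{α/(2n)} ‖g‖_{L²(S^{n-1})}` holds for large `R`, where
`μ_R = R^α μ(·/R)`.  Then for `f ∈ L²(μ)` and large `R`,
`‖(fμ)^∧|_{|ξ|=R}‖_{L²(R S^{n-1})} ≲ A R^{(n-1)/2 − (α/2)(1−1/n)} ‖f‖_{L²(μ)}`
(stated with squared norms, the `L²` norm on the sphere of radius `R` being
`R^{n-1} ∫_{S^{n-1}} |F(Rω)|² dσ(ω)`). -/
theorem stmt13 (n : ℕ) (hn : 2 ≤ n)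
    (μ : Measure (EuclideanSpace ℝ (Fin n))) [IsFiniteMeasure μ]
    (M : ℝ) (hM : 0 < M) (hsupp : μ (closedBall (0 : EuclideanSpace ℝ (Fin n)) M)ᶜ = 0)
    (Cμ α : ℝ) (hCμ : 0 ≤ Cμ) (hα : 0 < α)
    (hdim : ∀ (x : EuclideanSpace ℝ (Fin n)) (r : ℝ), 0 < r →
      μ (ball x r) ≤ ENNReal.ofReal (Cμ * r ^ α))
    (σ : Measure (sphere (0 : EuclideanSpace ℝ (Fin n)) 1))
    (hσ : σ = (volume : Measure (EuclideanSpace ℝ (Fin n))).toSphere)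
    (A R₀ : ℝ) (hA : 0 < A) (hR₀ : 1 ≤ R₀)
    (hrestrict : ∀ R : ℝ, R₀ ≤ R →
      ∀ g : sphere (0 : EuclideanSpace ℝ (Fin n)) 1 → ℂ,
        eLpNorm (fourierSphere n σ g) 2
            (ENNReal.ofReal (R ^ α) • Measure.map (fun x => R • x) μ)
          ≤ ENNReal.ofReal (A * R ^ (α / (2 * n))) * eLpNorm g 2 σ) :
    ∃ C R₁ : ℝ, 0 < C ∧ R₀ ≤ R₁ ∧
      ∀ (f : EuclideanSpace ℝ (Fin n) → ℂ), MemLp f 2 μ →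
        ∀ R : ℝ, R₁ ≤ R →
          ENNReal.ofReal (R ^ ((n : ℝ) - 1)) *
              ∫⁻ ω, (‖fourierMu n μ f (R • (ω : EuclideanSpace ℝ (Fin n)))‖₊ : ℝ≥0∞) ^ 2 ∂σ
            ≤ (ENNReal.ofReal
                (C * A * R ^ (((n : ℝ) - 1) / 2 - (α / 2) * (1 - 1 / n)))) ^ 2 *
              (eLpNorm f 2 μ) ^ 2 :=
  stmt13_general n μ α σ hσ A R₀ hrestrict
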